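/- For ν > 0 and x₀ > 1, lim_{ε→0⁺} (1/ε)·∫_1^∞ x^{−ν}·C_ν·(1 + ((x−x₀)/ε)²/ν)^{−(ν+1)/2} dx = x₀^{−ν}, where C_ν = Γ((ν+1)/2)/(Γ(ν/2)√(νπ)). -/

import Mathlib

/-!
Substituting `x = x₀ + ε t` turns `(1/ε) ∫_{x > 1} x^{-ν} C_ν k((x - x₀)/ε) dx`, with `k` the
Student kernel, into `∫ f(x₀ + ε t) C_ν k(t) dt` where `f = 1_{(1,∞)} · x^{-ν}`. Since `0 ≤ f ≤ 1`
and `f` is continuous at `x₀ > 1`, dominated convergence gives the limit `f(x₀) · C_ν ∫ k`, which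
is `x₀^{-ν}` because `C_ν ∫ k = 1`: via `u = √x` the integral of `k` is a Beta integral of the
second kind.
-/

open MeasureTheory Filter Real Set
open scoped Topology

/-- The normalization constant `C_ν = Γ((ν+1)/2)/(Γ(ν/2)√(νπ))` of the Student density. -/
noncomputable def Cnu (ν : ℝ) : ℝ :=
  Real.Gamma ((ν + 1) / 2) / (Real.Gamma (ν / 2) * Real.sqrt (ν * Real.pi))

theorem integral_comp_add_mul {E : Type*} [NormedAddCommGroup E] [NormedSpace ℝ E]
    (H : ℝ → E) (x₀ ε : ℝ) : ∫ t, H (x₀ + ε * t) = |ε⁻¹| • ∫ x, H x := by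
  rw [Measure.integral_comp_mul_left (fun y => H (x₀ + y)), integral_add_left_eq_self]

theorem tendsto_inv_mul_integral_mul_comp_sub_div {f g : ℝ → ℝ} {x₀ M : ℝ} (hf : Measurable f)
    (hfM : ∀ x, ‖f x‖ ≤ M) (hfx₀ : ContinuousAt f x₀) (hg : Integrable g) :
    Tendsto (fun ε => ε⁻¹ * ∫ x, f x * g ((x - x₀) / ε)) (𝓝[>] 0)
      (𝓝 (f x₀ * ∫ t, g t)) := by
  have hrescale : ∀ ε > 0, ε⁻¹ * ∫ x, f x * g ((x - x₀) / ε)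
      = ∫ t, f (x₀ + ε * t) * g t := fun ε hε => by
    have := integral_comp_add_mul (fun x => f x * g ((x - x₀) / ε)) x₀ ε
    simp only [add_sub_cancel_left, mul_div_cancel_left₀ _ hε.ne'] at this
    rw [this, abs_inv, abs_of_pos hε, smul_eq_mul]
  have hlim : ∀ t, Tendsto (fun ε => f (x₀ + ε * t)) (𝓝[>] 0) (𝓝 (f x₀)) := fun t => by
    have : Tendsto (fun ε : ℝ => x₀ + ε * t) (𝓝 0) (𝓝 x₀) :=
      Continuous.tendsto' (by fun_prop) 0 x₀ (by simp)
    exact hfx₀.tendsto.comp (this.mono_left nhdsWithin_le_nhds)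
  refine Tendsto.congr' (eventually_nhdsWithin_of_forall fun ε hε => (hrescale ε hε).symm) ?_
  rw [← integral_const_mul]
  refine tendsto_integral_filter_of_dominated_convergence (fun t => M * ‖g t‖) ?_ ?_
    (hg.norm.const_mul M) (Eventually.of_forall fun t => (hlim t).mul_const (g t))
  · exact Eventually.of_forall fun ε =>
      (hf.comp (by fun_prop)).aestronglyMeasurable.mul hg.aestronglyMeasurable
  · exact Eventually.of_forall fun ε => Eventually.of_forall fun t => by
      rw [norm_mul]; exact mul_le_mul_of_nonneg_right (hfM _) (norm_nonneg _)

theorem integral_rpow_mul_one_sub_rpow {a b : ℝ} (ha : 0 < a) (hb : 0 < b) :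
    ∫ x in (0 : ℝ)..1, x ^ (a - 1) * (1 - x) ^ (b - 1)
      = Gamma a * Gamma b / Gamma (a + b) := by
  have hbeta : Complex.betaIntegral a b
      = ((∫ x in (0 : ℝ)..1, x ^ (a - 1) * (1 - x) ^ (b - 1) : ℝ) : ℂ) := by
    rw [Complex.betaIntegral, ← intervalIntegral.integral_ofReal]
    refine intervalIntegral.integral_congr fun x hx => ?_
    rw [uIcc_of_le zero_le_one] at hx
    rw [Complex.ofReal_mul, Complex.ofReal_cpow hx.1, Complex.ofReal_cpow (sub_nonneg.2 hx.2)]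
    push_cast
    ring
  have key := Complex.betaIntegral_eq_Gamma_mul_div a b (by simpa using ha) (by simpa using hb)
  rw [hbeta, ← Complex.ofReal_add, Complex.Gamma_ofReal, Complex.Gamma_ofReal,
    Complex.Gamma_ofReal] at key
  exact_mod_cast key

theorem integral_Ioi_eq_integral_Ioo_div_one_sub {E : Type*} [NormedAddCommGroup E]
    [NormedSpace ℝ E] (F : ℝ → E) :
    ∫ x in Ioi 0, F x = ∫ t in Ioo 0 1, ((1 - t) ^ 2)⁻¹ • F (t / (1 - t)) := by
  have himage : (fun t : ℝ => t / (1 - t)) '' Ioo 0 1 = Ioi 0 := by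
    ext x
    refine ⟨?_, fun hx => ⟨x / (1 + x), ⟨?_, ?_⟩, ?_⟩⟩
    · rintro ⟨t, ⟨ht0, ht1⟩, rfl⟩
      exact div_pos ht0 (sub_pos.2 ht1)
    · have : (0 : ℝ) < x := hx
      positivity
    · rw [div_lt_one (by linarith [mem_Ioi.1 hx])]; linarith
    · have : (1 : ℝ) + x ≠ 0 := by linarith [mem_Ioi.1 hx]
      field_simp
      ring
  have hderiv : ∀ t ∈ Ioo (0 : ℝ) 1,
      HasDerivWithinAt (fun t : ℝ => t / (1 - t)) (((1 - t) ^ 2)⁻¹) (Ioo 0 1) t := by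
    intro t ht
    have h1t : 1 - t ≠ 0 := (sub_pos.2 ht.2).ne'
    refine (((hasDerivAt_id t).div ((hasDerivAt_id t).const_sub 1) h1t).congr_deriv ?_)
      |>.hasDerivWithinAt
    simp only [id]
    field_simp
    ring
  have hinj : InjOn (fun t : ℝ => t / (1 - t)) (Ioo 0 1) := by
    intro s hs t ht hst
    have h1s : 1 - s ≠ 0 := (sub_pos.2 hs.2).ne'
    have h1t : 1 - t ≠ 0 := (sub_pos.2 ht.2).ne'
    field_simp at hst
    linarith
  rw [← himage, integral_image_eq_integral_abs_deriv_smul measurableSet_Ioo hderiv hinj]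
  refine setIntegral_congr_fun measurableSet_Ioo fun t _ => ?_
  rw [abs_of_nonneg (by positivity)]

theorem integral_Ioi_rpow_mul_one_add_rpow_neg {a b : ℝ} (ha : 0 < a) (hb : 0 < b) :
    ∫ x in Ioi 0, x ^ (a - 1) * (1 + x) ^ (-(a + b)) = Gamma a * Gamma b / Gamma (a + b) := by
  rw [← integral_rpow_mul_one_sub_rpow ha hb, intervalIntegral.integral_of_le zero_le_one,
    integral_Ioc_eq_integral_Ioo, integral_Ioi_eq_integral_Ioo_div_one_sub]
  refine setIntegral_congr_fun measurableSet_Ioo fun t ⟨ht0, ht1⟩ => ?_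
  have h1t : 0 < 1 - t := sub_pos.2 ht1
  have hsum : 1 + t / (1 - t) = (1 - t)⁻¹ := by field_simp; ring
  have hpow : (1 - t) ^ (a + b) = (1 - t) ^ 2 * (1 - t) ^ (a - 1) * (1 - t) ^ (b - 1) := by
    rw [← rpow_two, ← rpow_add h1t, ← rpow_add h1t]
    ring_nf
  rw [smul_eq_mul, hsum, inv_rpow h1t.le, rpow_neg h1t.le, inv_inv, div_rpow ht0.le h1t.le, hpow]
  field_simp

theorem integral_one_add_sq_rpow_neg {s : ℝ} (hs : 1 / 2 < s) :
    ∫ u : ℝ, (1 + u ^ 2) ^ (-s) = √π * Gamma (s - 1 / 2) / Gamma s := by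
  have hhalf : ∫ u in Ioi (0 : ℝ), (1 + u ^ 2) ^ (-s)
      = 1 / 2 * ∫ x in Ioi (0 : ℝ), x ^ (1 / 2 - 1 : ℝ) * (1 + x) ^ (-s) := by
    rw [← integral_comp_rpow_Ioi (fun u : ℝ => (1 + u ^ 2) ^ (-s)) (p := 1 / 2) (by norm_num),
      ← integral_const_mul]
    refine setIntegral_congr_fun measurableSet_Ioi fun x (hx : 0 < x) => ?_
    rw [smul_eq_mul, ← rpow_natCast, ← rpow_mul hx.le, abs_of_pos (by norm_num : (0 : ℝ) < 1 / 2)]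
    norm_num
    ring
  have hbeta := integral_Ioi_rpow_mul_one_add_rpow_neg (a := 1 / 2) (b := s - 1 / 2)
    (by norm_num) (by linarith)
  rw [add_sub_cancel, Gamma_one_half_eq] at hbeta
  have heven := integral_comp_abs (f := fun u => (1 + u ^ 2) ^ (-s))
  simp only [sq_abs] at heven
  rw [heven, hhalf, hbeta]
  ring

noncomputable def studentKernel (ν t : ℝ) : ℝ := (1 + t ^ 2 / ν) ^ (-((ν + 1) / 2))

theorem integrable_studentKernel {ν : ℝ} (hν : 0 < ν) : Integrable (studentKernel ν) := by
  have h := (integrable_rpow_neg_one_add_norm_sq (E := ℝ) (r := ν + 1)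
    (by simpa using hν)).comp_div (sqrt_ne_zero'.2 hν)
  refine h.congr (Eventually.of_forall fun t => ?_)
  simp only [studentKernel, norm_eq_abs, sq_abs, div_pow, sq_sqrt hν.le, neg_div]

theorem integral_studentKernel {ν : ℝ} (hν : 0 < ν) :
    ∫ t, studentKernel ν t = √(ν * π) * Gamma (ν / 2) / Gamma ((ν + 1) / 2) := by
  have h := Measure.integral_comp_div (fun u : ℝ => (1 + u ^ 2) ^ (-((ν + 1) / 2))) √ν
  simp only [div_pow, sq_sqrt hν.le, abs_of_pos (sqrt_pos.2 hν), smul_eq_mul] at h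
  unfold studentKernel
  rw [h, integral_one_add_sq_rpow_neg (by linarith), sqrt_mul hν.le]
  ring_nf

theorem Cnu_mul_integral_studentKernel {ν : ℝ} (hν : 0 < ν) :
    Cnu ν * ∫ t, studentKernel ν t = 1 := by
  have := Gamma_pos_of_pos (by positivity : 0 < (ν + 1) / 2)
  have := Gamma_pos_of_pos (by positivity : 0 < ν / 2)
  have := sqrt_pos.2 (by positivity : 0 < ν * π)
  rw [integral_studentKernel hν, Cnu]
  field_simp

theorem norm_indicator_Ioi_one_rpow_neg_le_one {ν : ℝ} (hν : 0 ≤ ν) (x : ℝ) :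
    ‖(Ioi (1 : ℝ)).indicator (· ^ (-ν)) x‖ ≤ 1 := by
  by_cases hx : x ∈ Ioi 1
  · have hx1 : 1 ≤ x := le_of_lt hx
    rw [indicator_of_mem hx, norm_of_nonneg (rpow_nonneg (by linarith) _)]
    exact rpow_le_one_of_one_le_of_nonpos hx1 (neg_nonpos.2 hν)
  · simp [indicator_of_notMem hx]

theorem stmt18 (ν x₀ : ℝ) (hν : 0 < ν) (hx₀ : 1 < x₀) :
    Tendsto
      (fun ε : ℝ => (1 / ε) * ∫ x in Set.Ioi (1 : ℝ),
        x ^ (-ν) * (Cnu ν * (1 + ((x - x₀) / ε) ^ 2 / ν) ^ (-((ν + 1) / 2))))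
      (nhdsWithin 0 (Set.Ioi 0)) (nhds (x₀ ^ (-ν))) := by
  have hf_cont : ContinuousAt ((Ioi (1 : ℝ)).indicator (· ^ (-ν))) x₀ := by
    refine ContinuousOn.continuousAt_indicator (fun x hx => ?_) (by simpa using hx₀.ne')
    rw [interior_Ioi] at hx
    exact (continuousAt_rpow_const _ _ (Or.inl (by linarith [mem_Ioi.1 hx]))).continuousWithinAt
  have hlim := tendsto_inv_mul_integral_mul_comp_sub_div
    ((measurable_id.pow_const _).indicator measurableSet_Ioi)
    (norm_indicator_Ioi_one_rpow_neg_le_one hν.le) hf_cont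
    ((integrable_studentKernel hν).const_mul (Cnu ν))
  rw [integral_const_mul, Cnu_mul_integral_studentKernel hν, mul_one,
    indicator_of_mem (mem_Ioi.2 hx₀)] at hlim
  refine hlim.congr fun ε => ?_
  rw [one_div, ← integral_indicator measurableSet_Ioi]
  simp only [indicator_mul_left]
  rfl
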